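/- arXiv:math/0412444 — 2 statements merged into one kernel-verified Lean document; each statement's English description precedes it below -/
import Mathlib

section
/- Let h : [t₀,∞) → ℝ be differentiable with |h'(t)| ≤ D for all t and some D > 0. Suppose there is a sequence of intervals [t̲ᵢ, t̄ᵢ] with t̲ᵢ → ∞ and (t̄ᵢ - t̲ᵢ) → 0, such that |h(t)| > δ implies t belongs to some [t̲ᵢ, t̄ᵢ], and |h(t̲ᵢ)| ≤ δ for all i. Then limsup_{t→∞} |h(t)| ≤ δ. -/
theorem stmt_11 (t₀ D δ : ℝ) (hD : 0 < D) (h : ℝ → ℝ)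
    (hdiff : Differentiable ℝ h) (hD' : ∀ t, t₀ ≤ t → |deriv h t| ≤ D)
    (tl tu : ℕ → ℝ)
    (htl : Filter.Tendsto tl Filter.atTop Filter.atTop)
    (hlen : Filter.Tendsto (fun i => tu i - tl i) Filter.atTop (nhds 0))
    (hexc : ∀ t, t₀ ≤ t → |h t| > δ → ∃ i, t ∈ Set.Icc (tl i) (tu i))
    (hstart : ∀ i, |h (tl i)| ≤ δ) :
    Filter.limsup (fun t => |h t|) Filter.atTop ≤ δ := by
  have key : ∀ ε > (0:ℝ), ∀ᶠ t in Filter.atTop, |h t| ≤ δ + ε := by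
    intro ε hε
    have hεD : 0 < ε / D := div_pos hε hD
    obtain ⟨N1, hN1⟩ := (Metric.tendsto_atTop.1 hlen (ε / D) hεD)
    obtain ⟨N2, hN2⟩ := (Filter.tendsto_atTop.1 htl t₀).exists_forall_of_atTop
    set N := max N1 N2 with hN
    obtain ⟨B, hB⟩ : BddAbove (tu '' Set.Iio N) :=
      Set.Finite.bddAbove ((Set.finite_Iio N).image tu)
    filter_upwards [Filter.eventually_ge_atTop t₀, Filter.eventually_gt_atTop B]
      with t ht₀ htB
    by_cases hle : |h t| ≤ δ
    · linarith
    · obtain ⟨i, hi1, hi2⟩ := hexc t ht₀ (lt_of_not_ge hle)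
      have hiN : N ≤ i := by
        by_contra hlt
        exact absurd (le_trans hi2 (hB ⟨i, lt_of_not_ge hlt, rfl⟩)) (not_le.2 htB)
      have h1 : |tu i - tl i| < ε / D := by
        have := hN1 i (le_trans (le_max_left _ _) hiN)
        rwa [Real.dist_eq, sub_zero] at this
      have h2 : t₀ ≤ tl i := hN2 i (le_trans (le_max_right _ _) hiN)
      have hmvt : ‖h t - h (tl i)‖ ≤ D * ‖t - tl i‖ := by
        apply (convex_Ici t₀).norm_image_sub_le_of_norm_deriv_le
          (fun x _ => hdiff x) (fun x hx => hD' x hx) h2 (le_trans h2 hi1)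
      have h3 : |h t| ≤ |h (tl i)| + |h t - h (tl i)| := by
        calc |h t| = |h (tl i) + (h t - h (tl i))| := by ring_nf
          _ ≤ _ := abs_add_le _ _
      have h4 : ‖t - tl i‖ ≤ ε / D := by
        rw [Real.norm_eq_abs, abs_of_nonneg (by linarith)]
        calc t - tl i ≤ tu i - tl i := by linarith
          _ ≤ |tu i - tl i| := le_abs_self _
          _ ≤ ε / D := le_of_lt h1
      have h5 : D * ‖t - tl i‖ ≤ ε := by
        calc D * ‖t - tl i‖ ≤ D * (ε / D) := by
              exact mul_le_mul_of_nonneg_left h4 hD.le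
          _ = ε := mul_div_cancel₀ _ hD.ne'
      have := hstart i
      rw [Real.norm_eq_abs, Real.norm_eq_abs] at hmvt
      rw [Real.norm_eq_abs] at h5
      linarith
  have hcb : Filter.IsCoboundedUnder (· ≤ ·) Filter.atTop (fun t => |h t|) :=
    Filter.isCoboundedUnder_le_of_le _ (x := 0) (fun t => abs_nonneg _)
  have : ∀ ε > (0:ℝ), Filter.limsup (fun t => |h t|) Filter.atTop ≤ δ + ε :=
    fun ε hε => Filter.limsup_le_of_le hcb (key ε hε)
  exact le_of_forall_pos_le_add fun ε hε => this ε hε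
end

section
/- Let ν ≥ 0, k > 0 and let φ_ν be the deadzone function (φ_ν(ξ) = ξ - ν for ξ > ν, 0 on [-ν,ν], ξ + ν for ξ < -ν). Suppose ψ : [t₄,∞) → ℝ is differentiable and satisfies ψ'(t) = μ(t) - φ(ψ(t)) where φ(s)s ≥ k s² for all s, and |μ(t)| ≤ kν for all t ≥ t₄. Then for all t ≥ t₄, φ_ν(ψ(t))·ψ'(t) ≤ φ_ν(ψ(t))·(μ(t) - kψ(t)) ≤ 0. -/
/-- The deadzone function with deadzone `[-ν, ν]`. -/
noncomputable def deadzone (ν ξ : ℝ) : ℝ :=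
  if ξ > ν then ξ - ν else if ξ < -ν then ξ + ν else 0

theorem stmt_13 (ν k t₄ : ℝ) (hν : 0 ≤ ν) (hk : 0 < k)
    (ψ μ : ℝ → ℝ) (φ : ℝ → ℝ)
    (hφ : ∀ s : ℝ, φ s * s ≥ k * s ^ 2)
    (hψ : ∀ t, t₄ ≤ t → HasDerivAt ψ (μ t - φ (ψ t)) t)
    (hμ : ∀ t, t₄ ≤ t → |μ t| ≤ k * ν) :
    ∀ t, t₄ ≤ t →
      deadzone ν (ψ t) * (μ t - φ (ψ t)) ≤ deadzone ν (ψ t) * (μ t - k * ψ t) ∧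
        deadzone ν (ψ t) * (μ t - k * ψ t) ≤ 0 := by
  intro t ht
  obtain ⟨hμ1, hμ2⟩ := abs_le.mp (hμ t ht)
  set s := ψ t with hs
  have hφs := hφ s
  unfold deadzone
  by_cases h1 : s > ν
  · simp only [if_pos h1]
    have hspos : 0 < s := lt_of_le_of_lt hν h1
    have hφks : k * s ≤ φ s := by
      have := hφs
      nlinarith
    constructor
    · nlinarith
    · nlinarith [mul_nonneg (sub_pos.mpr h1).le (sub_nonneg.mpr hμ2),
        mul_nonneg hk.le (sq_nonneg (s - ν))]
  · simp only [if_neg h1]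
    by_cases h2 : s < -ν
    · simp only [if_pos h2]
      have hsneg : s < 0 := lt_of_lt_of_le h2 (by linarith)
      have hφks : φ s ≤ k * s := by nlinarith
      constructor
      · nlinarith
      · nlinarith [mul_nonneg (by linarith : (0:ℝ) ≤ -(s + ν)) (by linarith : (0:ℝ) ≤ μ t + k * ν),
          mul_nonneg hk.le (sq_nonneg (s + ν))]
    · simp only [if_neg h2]
      simp
end
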